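/- arXiv:hep-th/0501140 — 2 statements merged into one kernel-verified Lean document; each statement's English description precedes it below -/
import Mathlib

section
/- The Temperley-Lieb generators e_i on path space satisfy e_i e_{i+1} e_i = (1/β²) e_i. -/
/-!
Each `e_i` changes only the vertex at position `i + 1` of a path `p`, and only if
`p_i = p_{i+2}`. In `e_i e_{i+1} e_i`, the middle factor forces the vertex put at position `i + 1`
by the first `e_i` to be `p_{i+3}`, and the last `e_i` forces `e_{i+1}` to act trivially. Hence
each entry of the product is a single product of three weights, and the square roots telescope to
`1/β²` times the corresponding entry of `e_i`.
-/

open Finset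

/-- Elementary paths of length `L` on the graph `G`: sequences of `L+1`
pairwise-adjacent consecutive vertices. -/
abbrev PathsOn {V : Type*} (G : SimpleGraph V) (L : ℕ) : Type _ :=
  {p : Fin (L + 1) → V // ∀ k : Fin L, G.Adj (p k.castSucc) (p k.succ)}

/-- The Temperley-Lieb generator `e_i` acting on elementary paths of length `L`:
`e_i |⋯ v_i v_{i+1} v_{i+2} ⋯⟩ = (1/β) δ_{v_i v_{i+2}} Σ_{v'}
 √(μ_{v_{i+1}} μ_{v'} / (μ_{v_i} μ_{v_{i+2}})) |⋯ v_i v' v_{i+2} ⋯⟩`,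
written as a matrix in the orthonormal basis of elementary paths. -/
noncomputable def TLmat {V : Type*} [DecidableEq V] (G : SimpleGraph V)
    (μ : V → ℝ) (β : ℝ) (L i : ℕ) (hi : i + 2 ≤ L) :
    Matrix (PathsOn G L) (PathsOn G L) ℝ :=
  fun q p =>
    if (p.1 ⟨i, by omega⟩ = p.1 ⟨i + 2, by omega⟩) ∧
        (∀ k : Fin (L + 1), (k : ℕ) ≠ i + 1 → q.1 k = p.1 k) then
      (1 / β) * Real.sqrt (μ (p.1 ⟨i + 1, by omega⟩) * μ (q.1 ⟨i + 1, by omega⟩) /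
        (μ (p.1 ⟨i, by omega⟩) * μ (p.1 ⟨i + 2, by omega⟩)))
    else 0


namespace PathsOn

variable {V : Type*} {G : SimpleGraph V} {L : ℕ}

theorem ext_of_eq_off {p q : PathsOn G L} (j : ℕ) (hj : j ≤ L)
    (hoff : ∀ k : Fin (L + 1), (k : ℕ) ≠ j → q.1 k = p.1 k)
    (hon : q.1 ⟨j, by omega⟩ = p.1 ⟨j, by omega⟩) : q = p := by
  refine Subtype.ext <| funext fun k => ?_
  by_cases hk : (k : ℕ) = j
  · subst hk
    exact hon
  · exact hoff k hk

def move (p : PathsOn G L) (j : ℕ) (hj : j + 2 ≤ L) (w : V)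
    (h₁ : G.Adj (p.1 ⟨j, by omega⟩) w) (h₂ : G.Adj w (p.1 ⟨j + 2, by omega⟩)) :
    PathsOn G L :=
  ⟨Function.update p.1 ⟨j + 1, by omega⟩ w, fun k => by
    by_cases hk : (k : ℕ) = j
    · rw [show k.castSucc = ⟨j, by omega⟩ from Fin.ext hk,
        show k.succ = ⟨j + 1, by omega⟩ from Fin.ext (by simp [hk]),
        Function.update_self, Function.update_of_ne (by simp)]
      exact h₁
    by_cases hk' : (k : ℕ) = j + 1
    · rw [show k.castSucc = ⟨j + 1, by omega⟩ from Fin.ext hk',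
        show k.succ = ⟨j + 2, by omega⟩ from Fin.ext (by simp [hk']),
        Function.update_self, Function.update_of_ne (by simp)]
      exact h₂
    · rw [Function.update_of_ne (by simp [Fin.ext_iff, hk']),
        Function.update_of_ne (by simp [Fin.ext_iff]; omega)]
      exact p.2 k⟩

theorem move_apply_self (p : PathsOn G L) (j : ℕ) (hj : j + 2 ≤ L) (w : V)
    (h₁ : G.Adj (p.1 ⟨j, by omega⟩) w) (h₂ : G.Adj w (p.1 ⟨j + 2, by omega⟩)) :
    (p.move j hj w h₁ h₂).1 ⟨j + 1, by omega⟩ = w :=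
  Function.update_self ..

theorem move_apply_of_ne (p : PathsOn G L) (j : ℕ) (hj : j + 2 ≤ L) (w : V)
    (h₁ : G.Adj (p.1 ⟨j, by omega⟩) w) (h₂ : G.Adj w (p.1 ⟨j + 2, by omega⟩))
    {k : Fin (L + 1)} (hk : (k : ℕ) ≠ j + 1) :
    (p.move j hj w h₁ h₂).1 k = p.1 k :=
  Function.update_of_ne (by simpa [Fin.ext_iff] using hk) ..

end PathsOn

namespace Matrix

variable {n R : Type*} [Fintype n] [NonUnitalNonAssocSemiring R]

theorem mul_mul_apply_eq_zero (A B C : Matrix n n R) {q p : n}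
    (h : ∀ r s, A q r * B r s * C s p = 0) : (A * B * C) q p = 0 := by
  simp only [mul_apply, Finset.sum_mul]
  exact Finset.sum_eq_zero fun s _ => Finset.sum_eq_zero fun r _ => h r s

theorem mul_mul_apply_eq_of_support (A B C : Matrix n n R) {q p : n} (r₀ s₀ : n)
    (h : ∀ r s, A q r * B r s * C s p ≠ 0 → r = r₀ ∧ s = s₀) :
    (A * B * C) q p = A q r₀ * B r₀ s₀ * C s₀ p := by
  simp only [mul_apply, Finset.sum_mul]
  rw [Fintype.sum_eq_single s₀ fun s hs => Finset.sum_eq_zero fun r _ => ?_,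
    Fintype.sum_eq_single r₀ fun r hr => ?_]
  · by_contra hne
    exact hr (h r s₀ hne).1
  · by_contra hne
    exact hs (h r s hne).2

end Matrix

theorem braid_weight_identity {a c z : ℝ} (b : ℝ) (ha : 0 < a) (hc : 0 < c) (hz : 0 ≤ z) :
    √(c * z / (a * a)) * √(a * a / (c * c)) * √(b * c / (a * a)) = √(b * z / (a * a)) := by
  rw [← Real.sqrt_mul (by positivity), ← Real.sqrt_mul (by positivity)]
  congr 1
  field_simp

section TLMove

variable {V : Type*} {G : SimpleGraph V} {L : ℕ}

/-- `q` is one of the paths into which `e_i` sends the basis vector `p`. -/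
def TLMove (i : ℕ) (hi : i + 2 ≤ L) (q p : PathsOn G L) : Prop :=
  p.1 ⟨i, by omega⟩ = p.1 ⟨i + 2, by omega⟩ ∧
    ∀ k : Fin (L + 1), (k : ℕ) ≠ i + 1 → q.1 k = p.1 k

theorem TLMove.apply_eq {i : ℕ} {hi : i + 2 ≤ L} {q p : PathsOn G L} (h : TLMove i hi q p)
    (k : ℕ) (hk : k ≤ L) (hne : k ≠ i + 1) : q.1 ⟨k, by omega⟩ = p.1 ⟨k, by omega⟩ :=
  h.2 _ hne

theorem TLmat_of_move [DecidableEq V] (μ : V → ℝ) (β : ℝ) {i : ℕ} (hi : i + 2 ≤ L)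
    {q p : PathsOn G L} (h : TLMove i hi q p) :
    TLmat G μ β L i hi q p =
      1 / β * √(μ (p.1 ⟨i + 1, by omega⟩) * μ (q.1 ⟨i + 1, by omega⟩) /
        (μ (p.1 ⟨i, by omega⟩) * μ (p.1 ⟨i + 2, by omega⟩))) :=
  if_pos h

theorem TLmat_of_not_move [DecidableEq V] (μ : V → ℝ) (β : ℝ) {i : ℕ} (hi : i + 2 ≤ L)
    {q p : PathsOn G L} (h : ¬TLMove i hi q p) : TLmat G μ β L i hi q p = 0 :=
  if_neg h

theorem TLMove.of_TLmat_ne_zero [DecidableEq V] {μ : V → ℝ} {β : ℝ} {i : ℕ} {hi : i + 2 ≤ L}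
    {q p : PathsOn G L} (h : TLmat G μ β L i hi q p ≠ 0) : TLMove i hi q p :=
  not_not.mp (mt (TLmat_of_not_move μ β hi) h)

/-- `e_{i+1}` needs `s_{i+1} = s_{i+3} = p_{i+3}`, and the last `e_i` needs
`r_{i+2} = r_i = p_i = s_{i+2}`. -/
theorem TLMove.braid {i : ℕ} {hi₂ : i + 2 ≤ L} (hi : i + 3 ≤ L) {q r s p : PathsOn G L}
    (hsp : TLMove i hi₂ s p) (hrs : TLMove (i + 1) hi r s)
    (hqr : TLMove i hi₂ q r) :
    TLMove i hi₂ q p ∧ r = s ∧ s.1 ⟨i + 1, by omega⟩ = p.1 ⟨i + 3, by omega⟩ := by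
  have hr : r = s := by
    refine PathsOn.ext_of_eq_off (i + 2) (by omega) hrs.2 ?_
    calc r.1 ⟨i + 2, _⟩ = r.1 ⟨i, by omega⟩ := hqr.1.symm
      _ = s.1 ⟨i, by omega⟩ := hrs.apply_eq i (by omega) (by omega)
      _ = p.1 ⟨i, by omega⟩ := hsp.apply_eq i (by omega) (by omega)
      _ = p.1 ⟨i + 2, by omega⟩ := hsp.1
      _ = s.1 ⟨i + 2, by omega⟩ := (hsp.apply_eq (i + 2) (by omega) (by omega)).symm
  subst hr
  exact ⟨⟨hsp.1, fun k hk => (hqr.2 k hk).trans (hsp.2 k hk)⟩, rfl,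
    hrs.1.trans (hsp.apply_eq (i + 3) hi (by omega))⟩

theorem TLMove.eq_of_apply_eq {i : ℕ} {hi : i + 2 ≤ L} {s s' p : PathsOn G L}
    (hs : TLMove i hi s p) (hs' : TLMove i hi s' p)
    (h : s.1 ⟨i + 1, by omega⟩ = s'.1 ⟨i + 1, by omega⟩) : s = s' :=
  PathsOn.ext_of_eq_off (i + 1) (by omega) (fun k hk => (hs.2 k hk).trans (hs'.2 k hk).symm) h

theorem TLMove.exists_braid {i : ℕ} {hi₂ : i + 2 ≤ L} (hi : i + 3 ≤ L) {q p : PathsOn G L}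
    (hqp : TLMove i hi₂ q p) :
    ∃ s, TLMove i hi₂ s p ∧ s.1 ⟨i + 1, by omega⟩ = p.1 ⟨i + 3, by omega⟩ :=
  ⟨p.move i hi₂ (p.1 ⟨i + 3, by omega⟩) (hqp.1 ▸ p.2 ⟨i + 2, by omega⟩)
      (p.2 ⟨i + 2, by omega⟩).symm,
    ⟨hqp.1, fun _ hk => p.move_apply_of_ne _ _ _ _ _ hk⟩, p.move_apply_self ..⟩

variable [DecidableEq V] {μ : V → ℝ} {β : ℝ}

theorem TLMove.of_braid_term_ne_zero {i : ℕ} {hi₂ : i + 2 ≤ L} (hi : i + 3 ≤ L)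
    {q r s p : PathsOn G L}
    (h : TLmat G μ β L i hi₂ q r * TLmat G μ β L (i + 1) hi r s *
      TLmat G μ β L i hi₂ s p ≠ 0) :
    TLMove i hi₂ s p ∧ TLMove i hi₂ q p ∧ r = s ∧
      s.1 ⟨i + 1, by omega⟩ = p.1 ⟨i + 3, by omega⟩ := by
  obtain ⟨⟨hqr, hrs⟩, hsp⟩ := mul_ne_zero_iff.mp h |>.imp_left mul_ne_zero_iff.mp
  have hsp := TLMove.of_TLmat_ne_zero hsp
  exact ⟨hsp, TLMove.braid hi hsp (.of_TLmat_ne_zero hrs) (.of_TLmat_ne_zero hqr)⟩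

theorem TLmat_braid_term (hpos : ∀ w, 0 < μ w) {i : ℕ} {hi₂ : i + 2 ≤ L} (hi : i + 3 ≤ L)
    {q s p : PathsOn G L}
    (hqp : TLMove i hi₂ q p) (hsp : TLMove i hi₂ s p)
    (hs : s.1 ⟨i + 1, by omega⟩ = p.1 ⟨i + 3, by omega⟩) :
    TLmat G μ β L i hi₂ q s * TLmat G μ β L (i + 1) hi s s *
        TLmat G μ β L i hi₂ s p =
      1 / β ^ 2 * TLmat G μ β L i hi₂ q p := by
  have hs_off : ∀ k (hk : k ≤ L), k ≠ i + 1 → s.1 ⟨k, by omega⟩ = p.1 ⟨k, by omega⟩ :=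
    hsp.apply_eq
  have hqs : TLMove i hi₂ q s :=
    ⟨(hs_off i (by omega) (by omega)).trans
        (hqp.1.trans (hs_off (i + 2) (by omega) (by omega)).symm),
      fun k hk => (hqp.2 k hk).trans (hsp.2 k hk).symm⟩
  have hss : TLMove (i + 1) hi s s :=
    ⟨hs.trans (hs_off (i + 3) hi (by omega)).symm, fun _ _ => rfl⟩
  rw [TLmat_of_move μ β _ hqs, TLmat_of_move μ β _ hss, TLmat_of_move μ β _ hsp,
    TLmat_of_move μ β _ hqp, hs_off i (by omega) (by omega), hs_off (i + 2) (by omega) (by omega),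
    hs_off (i + 3) hi (by omega), hs, ← hqp.1]
  linear_combination (1 / β) ^ 3 * braid_weight_identity (μ (p.1 ⟨i + 1, by omega⟩))
    (hpos (p.1 ⟨i, by omega⟩)) (hpos (p.1 ⟨i + 3, by omega⟩)) (hpos (q.1 ⟨i + 1, by omega⟩)).le

end TLMove

/-- The Temperley-Lieb generators satisfy `e_i e_{i+1} e_i = (1/β²) e_i`. -/
theorem tl_braid_relation {V : Type*} [Fintype V] [DecidableEq V]
    (G : SimpleGraph V) [DecidableRel G.Adj]
    (μ : V → ℝ) (β : ℝ) (hpos : ∀ w, 0 < μ w)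
    (L i : ℕ) (hi : i + 3 ≤ L) :
    TLmat G μ β L i (by omega) * TLmat G μ β L (i + 1) (by omega) *
        TLmat G μ β L i (by omega)
      = (1 / β ^ 2) • TLmat G μ β L i (by omega) := by
  ext q p
  rw [Matrix.smul_apply, smul_eq_mul]
  by_cases hqp : TLMove i (by omega) q p
  · obtain ⟨s, hsp, hs⟩ := hqp.exists_braid hi
    rw [Matrix.mul_mul_apply_eq_of_support _ _ _ s s fun r s' h => ?_,
      TLmat_braid_term hpos hi hqp hsp hs]
    obtain ⟨hs'p, -, rfl, hs'⟩ := TLMove.of_braid_term_ne_zero hi h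
    have := hs'p.eq_of_apply_eq hsp (hs'.trans hs.symm)
    exact ⟨this, this⟩
  · rw [TLmat_of_not_move μ β _ hqp, mul_zero]
    exact Matrix.mul_mul_apply_eq_zero _ _ _ fun r s =>
      by_contra fun h => hqp (TLMove.of_braid_term_ne_zero hi h).2.1
end

section
/- For the path graph A_n (n ≥ 2) and each l = 0, 1, ..., n−1, the assignment C_l(v_1, v_2) = N^l_{v_1 v_2} given by the fused adjacency matrices N^l = U_l(M) (Chebyshev polynomial of second kind evaluated at the adjacency matrix M of A_n) has all entries in {0,1} and satisfies the consistency equation Σ_{i=0}^{n-1} (−1)^{x_i} (μ_i/μ_{v(x_i)}) C_l(i, v(x_i)) = 0 for every pair of adjacent vertices v, v' of A_n, where x_i = i mod 2, v(0)=v if v is even-coloured, v(1)=v'. -/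
open Finset

/-- The adjacency matrix of the path graph `A_n`. -/
def pathAdj (n : ℕ) : Matrix (Fin n) (Fin n) ℝ :=
  fun i j => if (i : ℕ) + 1 = (j : ℕ) ∨ (j : ℕ) + 1 = (i : ℕ) then 1 else 0

/-- The fused adjacency matrices `N^l = U_l(M)` of `A_n`: `N^0 = I`, `N^1 = M`,
`N^{l+2} = M N^{l+1} − N^l` (Chebyshev recursion). -/
def fusedAdj (n : ℕ) : ℕ → Matrix (Fin n) (Fin n) ℝ
  | 0 => 1
  | 1 => pathAdj n
  | (l + 2) => pathAdj n * fusedAdj n (l + 1) - fusedAdj n l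

/-!
The vector `s_j = sin (π (j + 1) / (n + 1))` satisfies `s_{j-1} + s_{j+1} = 2 cos (π / (n + 1)) s_j`
also at the ends of the path, because the missing neighbours would be `s_{-1} = sin 0` and
`s_n = sin π`, both zero. So `μ` is a left eigenvector of `M`, hence of every `N^l`:
`∑ i, μ_i N^l_{iv} = a μ_v` with `a` independent of `v`.

Running the Chebyshev recursion on columns identifies `N^l` (`l < n`) with the indicator of the
su(2) fusion rule at level `n - 1`. This gives the entries in `{0, 1}` and the parity constraint
`N^l_{ij} = 0` unless `i + j + l` is even. Since `i + v(x_i)` is always even, every summand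
vanishes for odd `l`; for even `l` the even `i` only meet `v` and the odd `i` only meet `v'`,
so the sum is `a μ_v / μ_v - a μ_{v'} / μ_{v'} = 0`.
-/

open Real Matrix

theorem Fin.sum_ite_intCast_eq {M : Type*} [AddCommMonoid M] {n : ℕ} (c : ℤ) (x : M) :
    ∑ k : Fin n, (if (k : ℤ) = c then x else 0) = if 0 ≤ c ∧ c < n then x else 0 := by
  split_ifs with h
  · rw [sum_eq_single ⟨c.toNat, by omega⟩
      (fun k _ hk => if_neg fun hc => hk (Fin.ext (by simp only; omega))) (by simp)]
    simp only [Int.toNat_of_nonneg h.1, if_true]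
  · exact sum_eq_zero fun k _ => if_neg (by omega)

theorem pathAdj_mulVec {n : ℕ} {f : ℤ → ℝ} (hlo : f (-1) = 0) (hhi : f n = 0) (i : Fin n) :
    (pathAdj n *ᵥ fun k => f k) i = f (i - 1) + f (i + 1) := by
  have hterm (k : Fin n) : pathAdj n i k * f k =
      (if (k : ℤ) = i - 1 then f (i - 1) else 0) + (if (k : ℤ) = i + 1 then f (i + 1) else 0) := by
    simp only [pathAdj]
    split_ifs <;> first | (exfalso; omega) | simp [*]
  have hboundary (c : ℤ) (h₁ : -1 ≤ c) (h₂ : c ≤ n) :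
      (if 0 ≤ c ∧ c < n then f c else 0) = f c := by
    split_ifs
    · rfl
    · obtain rfl | rfl : c = -1 ∨ c = n := by omega
      exacts [hlo.symm, hhi.symm]
  simp only [mulVec, dotProduct, hterm, sum_add_distrib, Fin.sum_ite_intCast_eq]
  rw [hboundary _ (by omega) (by omega), hboundary _ (by omega) (by omega)]

theorem pathAdj_transpose (n : ℕ) : (pathAdj n)ᵀ = pathAdj n := by
  ext i j
  simp only [transpose_apply, pathAdj, or_comm]

theorem sin_sub_add_sin_add (x y : ℝ) : sin (x - y) + sin (x + y) = 2 * cos y * sin x := by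
  rw [sin_sub, sin_add]
  ring

theorem pathAdj_mulVec_sin (n : ℕ) :
    (pathAdj n *ᵥ fun j : Fin n => sin (π * (j + 1) / (n + 1))) =
      (2 * cos (π / (n + 1))) • fun j : Fin n => sin (π * (j + 1) / (n + 1)) := by
  ext i
  have hsin_n : sin (π * ((n : ℤ) + 1) / (n + 1)) = 0 := by
    rw [Int.cast_natCast, mul_div_assoc, div_self (by positivity), mul_one, sin_pi]
  have := pathAdj_mulVec (f := fun k : ℤ => sin (π * (k + 1) / (n + 1))) (by simp) hsin_n i
  push_cast at this
  rw [this, Pi.smul_apply, smul_eq_mul, ← sin_sub_add_sin_add]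
  congr 2 <;> ring

theorem sin_pi_mul_div_pos {x y : ℝ} (hx : 0 < x) (hxy : x < y) : 0 < sin (π * x / y) :=
  sin_pos_of_pos_of_lt_pi (div_pos (mul_pos pi_pos hx) (hx.trans hxy))
    (by rw [div_lt_iff₀ (hx.trans hxy)]; nlinarith [pi_pos])

theorem exists_vecMul_fusedAdj_eq_smul {n : ℕ} {ν : Fin n → ℝ} {c : ℝ}
    (hν : ν ᵥ* pathAdj n = c • ν) (l : ℕ) : ∃ a : ℝ, ν ᵥ* fusedAdj n l = a • ν := by
  induction l using fusedAdj.induct with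
  | case1 => exact ⟨1, by simp [fusedAdj]⟩
  | case2 => exact ⟨c, hν⟩
  | case3 l ih₁ ih₀ =>
    obtain ⟨a₁, h₁⟩ := ih₁
    obtain ⟨a₀, h₀⟩ := ih₀
    refine ⟨c * a₁ - a₀, ?_⟩
    rw [fusedAdj, vecMul_sub, ← vecMul_vecMul, hν, smul_vecMul, h₁, h₀, smul_smul, sub_smul]

/-- The su(2) fusion rule at level `n - 1`. The arguments `i, j` are integers so that the rule can
be evaluated at the fictitious vertices `-1` and `n`, where it fails. -/
abbrev su2FusionRule (n l : ℕ) (i j : ℤ) : Prop :=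
  (i + j + l) % 2 = 0 ∧ i ≤ j + l ∧ j ≤ i + l ∧ l ≤ i + j ∧ i + j + l + 2 ≤ 2 * n

theorem fusedAdj_apply {n l : ℕ} (hl : l < n) (i j : Fin n) :
    fusedAdj n l i j = if su2FusionRule n l i j then 1 else 0 := by
  induction l using fusedAdj.induct generalizing i with
  | case1 =>
    simp only [fusedAdj, one_apply, su2FusionRule, Fin.ext_iff, Nat.cast_zero]
    split_ifs <;> first | rfl | (exfalso; omega)
  | case2 =>
    simp only [fusedAdj, pathAdj, su2FusionRule, Nat.cast_one]
    split_ifs <;> first | rfl | (exfalso; omega)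
  | case3 l ih₁ ih₀ =>
    let f : ℤ → ℝ := fun k => if su2FusionRule n (l + 1) k j then 1 else 0
    have hcol : (fun k => fusedAdj n (l + 1) k j) = fun k : Fin n => f k :=
      funext fun k => ih₁ (by omega) k
    have hlo : f (-1) = 0 := if_neg (by omega)
    have hhi : f n = 0 := if_neg (by omega)
    have hmul : (pathAdj n * fusedAdj n (l + 1)) i j = f (i - 1) + f (i + 1) := by
      rw [← pathAdj_mulVec hlo hhi i, ← hcol]
      rfl
    rw [fusedAdj, Matrix.sub_apply, ih₀ (by omega), hmul]
    simp only [f, su2FusionRule, Nat.cast_add, Nat.cast_one, Nat.succ_eq_add_one]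
    split_ifs <;> first | (exfalso; omega) | norm_num

theorem fusedAdj_apply_eq_zero_of_not_even {n l : ℕ} (hl : l < n) {i j : Fin n}
    (h : ¬Even ((i : ℕ) + j + l)) : fusedAdj n l i j = 0 := by
  rw [fusedAdj_apply hl, if_neg]
  rw [Nat.even_iff] at h
  omega

theorem sum_alternating_consistency_eq_zero {n l : ℕ} {N : Matrix (Fin n) (Fin n) ℝ}
    {μ : Fin n → ℝ} {a : ℝ} (hN : μ ᵥ* N = a • μ) (hμ : ∀ i, μ i ≠ 0)
    (hpar : ∀ i j : Fin n, ¬Even ((i : ℕ) + j + l) → N i j = 0)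
    {v v' : Fin n} (hv : Even (v : ℕ)) (hv' : ¬Even (v' : ℕ)) :
    ∑ i : Fin n, (-1 : ℝ) ^ (i : ℕ) * (μ i / μ (if Even (i : ℕ) then v else v')) *
      N i (if Even (i : ℕ) then v else v') = 0 := by
  rcases Nat.even_or_odd l with hl | hl
  · have hcol (j : Fin n) : ∑ i, μ i * N i j / μ j = a := by
      rw [← sum_div, ← mul_div_cancel_right₀ a (hμ j)]
      exact congrArg (· / μ j) (congrFun hN j)
    have hterm (i : Fin n) :
        (-1 : ℝ) ^ (i : ℕ) * (μ i / μ (if Even (i : ℕ) then v else v')) *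
          N i (if Even (i : ℕ) then v else v') = μ i * N i v / μ v - μ i * N i v' / μ v' := by
      by_cases hi : Even (i : ℕ)
      · rw [if_pos hi, hi.neg_one_pow, hpar i v' (by grind)]
        ring
      · rw [if_neg hi, (Nat.not_even_iff_odd.mp hi).neg_one_pow, hpar i v (by grind)]
        ring
    rw [sum_congr rfl fun i _ => hterm i, sum_sub_distrib, hcol, hcol, sub_self]
  · refine sum_eq_zero fun i _ => ?_
    rw [hpar i _ ?_, mul_zero]
    split_ifs with hi <;> grind

theorem fused_adjacency_solves_consistency_general (n : ℕ)
    (μ : Fin n → ℝ)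
    (hμ : ∀ j, μ j = Real.sin (Real.pi * (j + 1) / (n + 1)) / Real.sin (Real.pi / (n + 1)))
    (l : ℕ) (hl : l < n) :
    (∀ i j, fusedAdj n l i j = 0 ∨ fusedAdj n l i j = 1) ∧
    (∀ v v' : Fin n,
      ((v : ℕ) + 1 = (v' : ℕ) ∨ (v' : ℕ) + 1 = (v : ℕ)) → Even (v : ℕ) →
      ∑ i : Fin n, (-1 : ℝ) ^ (i : ℕ) *
          (μ i / μ (if Even (i : ℕ) then v else v')) *
          fusedAdj n l i (if Even (i : ℕ) then v else v') = 0) := by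
  have hμ_smul : μ = (sin (π / (n + 1)))⁻¹ • fun j : Fin n => sin (π * (j + 1) / (n + 1)) :=
    funext fun j => (hμ j).trans (div_eq_inv_mul _ _)
  have hμ_ne (j : Fin n) : μ j ≠ 0 := by
    have hj : (j : ℝ) < n := by exact_mod_cast j.isLt
    have hden := sin_pi_mul_div_pos one_pos (by linarith : (1 : ℝ) < n + 1)
    rw [mul_one] at hden
    rw [hμ j]
    exact div_ne_zero (sin_pi_mul_div_pos (by positivity) (by linarith)).ne' hden.ne'
  have hμ_eig : μ ᵥ* pathAdj n = (2 * cos (π / (n + 1))) • μ := by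
    rw [← pathAdj_transpose, vecMul_transpose, hμ_smul, mulVec_smul, pathAdj_mulVec_sin, smul_comm]
  obtain ⟨a, ha⟩ := exists_vecMul_fusedAdj_eq_smul hμ_eig l
  refine ⟨fun i j => ?_, fun v v' hadj hv => ?_⟩
  · rw [fusedAdj_apply hl]
    split_ifs <;> simp
  · exact sum_alternating_consistency_eq_zero ha hμ_ne
      (fun _ _ => fusedAdj_apply_eq_zero_of_not_even hl) hv (by grind)

/-- For the path graph `A_n` (`n ≥ 2`) and each `l = 0, …, n−1`, the fused
adjacency matrix `N^l` has all entries in `{0,1}` and the assignment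
`C_l(v₁,v₂) = N^l_{v₁v₂}` satisfies the consistency equation
`Σ_{i} (−1)^{x_i} (μ_i/μ_{v(x_i)}) C_l(i, v(x_i)) = 0` for every pair of
adjacent vertices `v, v'` of `A_n` with `v` even-coloured, where `x_i = i mod 2`,
`v(0) = v`, `v(1) = v'`. -/
theorem fused_adjacency_solves_consistency (n : ℕ) (hn : 2 ≤ n)
    (μ : Fin n → ℝ)
    (hμ : ∀ j, μ j = Real.sin (Real.pi * (j + 1) / (n + 1)) / Real.sin (Real.pi / (n + 1)))
    (l : ℕ) (hl : l < n) :
    (∀ i j, fusedAdj n l i j = 0 ∨ fusedAdj n l i j = 1) ∧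
    (∀ v v' : Fin n,
      ((v : ℕ) + 1 = (v' : ℕ) ∨ (v' : ℕ) + 1 = (v : ℕ)) → Even (v : ℕ) →
      ∑ i : Fin n, (-1 : ℝ) ^ (i : ℕ) *
          (μ i / μ (if Even (i : ℕ) then v else v')) *
          fusedAdj n l i (if Even (i : ℕ) then v else v') = 0) :=
  fused_adjacency_solves_consistency_general n μ hμ l hl
end
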